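/- Let T = {T_t}_{t∈ℝ} be an ergodic measurable measure-preserving flow on a standard probability Borel space (X, B, μ) which is partially rigid along a sequence t_n → ∞ with rigidity constant u ∈ (0, 1]. Then for every subsequence {t_{n_k}} of {t_n} such that the Koopman operators U_{t_{n_k}} converge in the weak operator topology on L²(X, μ), the limit operator equals u·Id + (1−u)·K for some K ∈ J(T). -/

import Mathlib

open MeasureTheory Filter
open scoped ENNReal RealInnerProductSpace symmDiff

/-- The constant function `1` as an element of `L²(μ)`. -/
noncomputable def lpOne {X : Type*} [MeasurableSpace X] (μ : Measure X)
    [IsProbabilityMeasure μ] : Lp ℝ 2 μ := Lp.const 2 μ (1 : ℝ)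

/-- A Markov operator on `L²(μ)`: a bounded operator `V` with `V f ≥ 0` whenever
`f ≥ 0`, `V 1 = 1` and `V* 1 = 1`. -/
def IsMarkovOp {X : Type*} [MeasurableSpace X] (μ : Measure X) [IsProbabilityMeasure μ]
    (V : Lp ℝ 2 μ →L[ℝ] Lp ℝ 2 μ) : Prop :=
  (∀ f : Lp ℝ 2 μ, 0 ≤ f → 0 ≤ V f) ∧
  V (lpOne μ) = lpOne μ ∧
  ContinuousLinearMap.adjoint V (lpOne μ) = lpOne μ

/-- `Φ` belongs to the closure of `S` in the weak operator topology on
bounded operators of `L²(μ)`. -/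
def InWOTClosure {X : Type*} [MeasurableSpace X] (μ : Measure X)
    (S : Set (Lp ℝ 2 μ →L[ℝ] Lp ℝ 2 μ)) (Φ : Lp ℝ 2 μ →L[ℝ] Lp ℝ 2 μ) : Prop :=
  ContinuousLinearMapWOT.ofCLM (σ := RingHom.id ℝ) (E := Lp ℝ 2 μ) (F := Lp ℝ 2 μ) Φ ∈
    closure ((ContinuousLinearMapWOT.ofCLM (σ := RingHom.id ℝ) (E := Lp ℝ 2 μ) (F := Lp ℝ 2 μ)) '' S)

/-- The flow `{T_t}` is partially rigid along the sequence `{t_n}` with rigidity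
constant `u`: `liminf_n μ(A ∩ T_{-t_n} A) ≥ u · μ(A)` for every measurable `A`. -/
def PartiallyRigidAlongWith {X : Type*} [MeasurableSpace X] (μ : Measure X)
    (T : ℝ → X → X) (t : ℕ → ℝ) (u : ℝ) : Prop :=
  ∀ A : Set X, MeasurableSet A →
    ENNReal.ofReal u * μ A ≤ Filter.liminf (fun n => μ (A ∩ T (t n) ⁻¹' A)) Filter.atTop

/-- The flow `{T_t}` is partially rigid along the sequence `{t_n}`. -/
def PartiallyRigidAlong {X : Type*} [MeasurableSpace X] (μ : Measure X)
    (T : ℝ → X → X) (t : ℕ → ℝ) : Prop :=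
  ∃ u : ℝ, 0 < u ∧ u ≤ 1 ∧ PartiallyRigidAlongWith μ T t u

/-- The measure-preserving flow `{T_t}` is ergodic: every measurable set `A` which is
invariant (mod `μ`) under every `T_t` has measure `0` or `1`. -/
def ErgodicFlow {X : Type*} [MeasurableSpace X] (μ : Measure X) (T : ℝ → X → X) : Prop :=
  ∀ A : Set X, MeasurableSet A → (∀ t : ℝ, μ ((T t ⁻¹' A) ∆ A) = 0) →
    μ A = 0 ∨ μ A = 1

/-!
Partial rigidity passes to any weak limit `Φ` of the `U_{t_{n_k}}`: on indicators,
`⟪1_A, Φ 1_A⟫ = lim μ(A ∩ T_{-t_{n_k}} A) ≥ u μ(A)`, and since `Φ` is positive this diagonal bound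
upgrades to positivity of `Φ - u·Id`. The limit inherits `Φ 1 = Φ* 1 = 1` and commutation with the
flow from the Koopman operators, so `K = (Φ - u·Id) / (1 - u)` lies in `J(T)` when `u < 1`; when
`u = 1`, the positive operator `Φ - Id` has `(Φ - Id)* 1 = 0`, hence vanishes.
-/

open Topology

section L2Order

variable {X : Type*} [MeasurableSpace X] {μ : Measure X}

lemma MeasureTheory.Lp.smul_nonneg_of_nonneg {p : ℝ≥0∞} {c : ℝ} (hc : 0 ≤ c) {f : Lp ℝ p μ}
    (hf : 0 ≤ f) : 0 ≤ c • f := by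
  rw [← Lp.coeFn_nonneg]
  filter_upwards [Lp.coeFn_smul c f, (Lp.coeFn_nonneg f).2 hf] with x hcf hfx
  rw [hcf]
  exact mul_nonneg hc hfx

lemma MeasureTheory.L2.inner_nonneg_of_nonneg {f g : Lp ℝ 2 μ} (hf : 0 ≤ f) (hg : 0 ≤ g) :
    0 ≤ ⟪f, g⟫ := by
  rw [L2.inner_def]
  refine integral_nonneg_of_ae ?_
  filter_upwards [(Lp.coeFn_nonneg f).2 hf, (Lp.coeFn_nonneg g).2 hg] with x hfx hgx
  simpa using mul_nonneg hgx hfx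

lemma MeasureTheory.L2.inner_le_inner_of_le {f f' g g' : Lp ℝ 2 μ} (hf : 0 ≤ f) (hg : 0 ≤ g)
    (hff' : f ≤ f') (hgg' : g ≤ g') : ⟪f, g⟫ ≤ ⟪f', g'⟫ := by
  have h₁ := L2.inner_nonneg_of_nonneg hf (sub_nonneg.2 hgg')
  have h₂ := L2.inner_nonneg_of_nonneg (sub_nonneg.2 hff') (hg.trans hgg')
  rw [inner_sub_right] at h₁
  rw [inner_sub_left] at h₂
  linarith

variable [IsFiniteMeasure μ]

variable (μ) in
noncomputable def indicatorL2 {A : Set X} (hA : MeasurableSet A) : Lp ℝ 2 μ :=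
  indicatorConstLp 2 hA (measure_ne_top μ A) 1

lemma indicatorL2_nonneg {A : Set X} (hA : MeasurableSet A) : 0 ≤ indicatorL2 μ hA := by
  rw [← Lp.coeFn_nonneg]
  filter_upwards [indicatorConstLp_coeFn (p := 2) (μ := μ) (hs := hA) (c := (1 : ℝ))] with x hx
  rw [indicatorL2, hx]
  exact Set.indicator_nonneg (fun _ _ => zero_le_one) x

lemma indicatorL2_mono {A B : Set X} (hA : MeasurableSet A) (hB : MeasurableSet B) (hAB : A ⊆ B) :
    indicatorL2 μ hA ≤ indicatorL2 μ hB := by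
  rw [← Lp.coeFn_le]
  filter_upwards [indicatorConstLp_coeFn (p := 2) (μ := μ) (hs := hA) (c := (1 : ℝ)),
    indicatorConstLp_coeFn (p := 2) (μ := μ) (hs := hB) (c := (1 : ℝ))] with x hxA hxB
  rw [indicatorL2, indicatorL2, hxA, hxB]
  exact Set.indicator_le_indicator_of_subset hAB (fun _ => zero_le_one) x

lemma inner_indicatorL2_indicatorL2 {A B : Set X} (hA : MeasurableSet A) (hB : MeasurableSet B) :
    ⟪indicatorL2 μ hA, indicatorL2 μ hB⟫ = μ.real (A ∩ B) := by
  simp [indicatorL2, L2.inner_indicatorConstLp_indicatorConstLp]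

lemma nonneg_of_forall_inner_indicatorL2_nonneg {h : Lp ℝ 2 μ}
    (H : ∀ A (hA : MeasurableSet A), 0 ≤ ⟪indicatorL2 μ hA, h⟫) : 0 ≤ h := by
  rw [← Lp.coeFn_nonneg]
  refine ae_nonneg_of_forall_setIntegral_nonneg ((Lp.memLp h).integrable one_le_two) ?_
  intro A hA _
  rw [← L2.inner_indicatorConstLp_one hA (measure_ne_top μ A)]
  exact H A hA

end L2Order

section Probability

variable {X : Type*} [MeasurableSpace X] {μ : Measure X} [IsProbabilityMeasure μ]

lemma indicatorL2_univ : indicatorL2 μ MeasurableSet.univ = lpOne μ :=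
  indicatorConstLp_univ 2 μ 1

lemma inner_lpOne (h : Lp ℝ 2 μ) : ⟪lpOne μ, h⟫ = ∫ x, h x ∂μ := by
  rw [← indicatorL2_univ, indicatorL2, L2.inner_indicatorConstLp_one, setIntegral_univ]

lemma eq_zero_of_nonneg_of_inner_lpOne_eq_zero {h : Lp ℝ 2 μ} (hh : 0 ≤ h)
    (h₁ : ⟪lpOne μ, h⟫ = 0) : h = 0 := by
  rw [inner_lpOne, integral_eq_zero_iff_of_nonneg_ae ((Lp.coeFn_nonneg h).2 hh)
    ((Lp.memLp h).integrable one_le_two)] at h₁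
  exact Lp.ext (h₁.trans (Lp.coeFn_zero ℝ 2 μ).symm)

end Probability

section PositiveOperators

variable {X : Type*} [MeasurableSpace X] {μ : Measure X}

open ContinuousLinearMap

/-- Positivity of `Ψ` is tested on indicators by passing to `Ψ†`, which is positive as well. -/
lemma nonneg_apply_of_forall_inner_indicatorL2_nonneg [IsFiniteMeasure μ]
    (Ψ : Lp ℝ 2 μ →L[ℝ] Lp ℝ 2 μ)
    (hΨ : ∀ A B (hA : MeasurableSet A) (hB : MeasurableSet B),
      0 ≤ ⟪indicatorL2 μ hB, Ψ (indicatorL2 μ hA)⟫)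
    {f : Lp ℝ 2 μ} (hf : 0 ≤ f) : 0 ≤ Ψ f := by
  have hadj : ∀ B (hB : MeasurableSet B), 0 ≤ adjoint Ψ (indicatorL2 μ hB) :=
    fun B hB => nonneg_of_forall_inner_indicatorL2_nonneg fun A hA => by
      rw [real_inner_comm, adjoint_inner_left]
      exact hΨ A B hA hB
  refine nonneg_of_forall_inner_indicatorL2_nonneg fun B hB => ?_
  rw [← adjoint_inner_left]
  exact L2.inner_nonneg_of_nonneg (hadj B hB) hf

lemma eq_zero_of_nonneg_apply_of_adjoint_lpOne_eq_zero [IsProbabilityMeasure μ]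
    {Ψ : Lp ℝ 2 μ →L[ℝ] Lp ℝ 2 μ} (hΨ : ∀ f, 0 ≤ f → 0 ≤ Ψ f)
    (h₁ : adjoint Ψ (lpOne μ) = 0) : Ψ = 0 := by
  have hpos : ∀ f, 0 ≤ f → Ψ f = 0 := fun f hf =>
    eq_zero_of_nonneg_of_inner_lpOne_eq_zero (hΨ f hf)
      (by rw [← adjoint_inner_left, h₁, inner_zero_left])
  ext1 f
  rw [← posPart_sub_negPart f, map_sub, hpos _ (posPart_nonneg f), hpos _ (negPart_nonneg f),
    sub_zero, zero_apply]

lemma isMarkovOp_id [IsProbabilityMeasure μ] : IsMarkovOp μ (ContinuousLinearMap.id ℝ _) :=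
  ⟨fun _ hf => hf, rfl, by rw [adjoint_id, id_apply]⟩

theorem exists_isMarkovOp_eq_smul_id_add_smul [IsProbabilityMeasure μ] {ι : Type*}
    {V : ι → Lp ℝ 2 μ →L[ℝ] Lp ℝ 2 μ} {Φ : Lp ℝ 2 μ →L[ℝ] Lp ℝ 2 μ} {u : ℝ} (hu : u ≤ 1)
    (hΦ : Φ (lpOne μ) = lpOne μ) (hΦadj : adjoint Φ (lpOne μ) = lpOne μ)
    (hpos : ∀ f, 0 ≤ f → 0 ≤ Φ f - u • f) (hcomm : ∀ i, Φ.comp (V i) = (V i).comp Φ) :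
    ∃ K : Lp ℝ 2 μ →L[ℝ] Lp ℝ 2 μ, IsMarkovOp μ K ∧ (∀ i, K.comp (V i) = (V i).comp K) ∧
      Φ = u • ContinuousLinearMap.id ℝ _ + (1 - u) • K := by
  rcases hu.lt_or_eq with hu | rfl
  · have hu' : 1 - u ≠ 0 := by linarith
    set Ψ := Φ - u • ContinuousLinearMap.id ℝ (Lp ℝ 2 μ)
    have hscale : (1 - u)⁻¹ • (lpOne μ - u • lpOne μ) = lpOne μ := by
      rw [show lpOne μ - u • lpOne μ = (1 - u) • lpOne μ by rw [sub_smul, one_smul], smul_smul,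
        inv_mul_cancel₀ hu', one_smul]
    refine ⟨(1 - u)⁻¹ • Ψ, ⟨fun f hf => ?_, ?_, ?_⟩, fun i => ?_, ?_⟩
    · exact Lp.smul_nonneg_of_nonneg (inv_nonneg.2 (by linarith)) (hpos f hf)
    · simpa [Ψ, hΦ] using hscale
    · simpa [Ψ, hΦadj, adjoint_id] using hscale
    · simp [Ψ, sub_comp, comp_sub, hcomm i]
    · simp [Ψ, smul_smul, mul_inv_cancel₀ hu']
  · refine ⟨ContinuousLinearMap.id ℝ _, isMarkovOp_id, fun i => by simp, ?_⟩
    have hzero : Φ - ContinuousLinearMap.id ℝ _ = 0 :=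
      eq_zero_of_nonneg_apply_of_adjoint_lpOne_eq_zero (fun f hf => by simpa using hpos f hf)
        (by simp [hΦadj, adjoint_id])
    simpa [sub_eq_zero] using hzero

end PositiveOperators

section WeakOperatorLimits

variable {E : Type*} [NormedAddCommGroup E] [InnerProductSpace ℝ E] [CompleteSpace E]
  {ι : Type*} {l : Filter ι} {A : ι → E →L[ℝ] E} {Φ : E →L[ℝ] E}

open ContinuousLinearMap

lemma tendsto_inner_apply_of_tendsto_ofCLM
    (h : Tendsto (fun i => ContinuousLinearMapWOT.ofCLM (A i)) l
      (𝓝 (ContinuousLinearMapWOT.ofCLM Φ))) (x y : E) :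
    Tendsto (fun i => ⟪y, A i x⟫) l (𝓝 ⟪y, Φ x⟫) :=
  ContinuousLinearMapWOT.tendsto_iff_forall_inner_apply_tendsto.1 h x y

variable [l.NeBot]

lemma inner_apply_eq_of_tendsto_ofCLM
    (h : Tendsto (fun i => ContinuousLinearMapWOT.ofCLM (A i)) l
      (𝓝 (ContinuousLinearMapWOT.ofCLM Φ))) {x y : E} {c : ℝ} (hA : ∀ i, ⟪y, A i x⟫ = c) :
    ⟪y, Φ x⟫ = c :=
  tendsto_nhds_unique (tendsto_inner_apply_of_tendsto_ofCLM h x y)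
    (tendsto_const_nhds.congr fun i => (hA i).symm)

lemma apply_eq_of_tendsto_ofCLM
    (h : Tendsto (fun i => ContinuousLinearMapWOT.ofCLM (A i)) l
      (𝓝 (ContinuousLinearMapWOT.ofCLM Φ))) {x : E} (hA : ∀ i, A i x = x) : Φ x = x :=
  ext_inner_left ℝ fun y => inner_apply_eq_of_tendsto_ofCLM h fun i => by rw [hA]

lemma adjoint_apply_eq_of_tendsto_ofCLM
    (h : Tendsto (fun i => ContinuousLinearMapWOT.ofCLM (A i)) l
      (𝓝 (ContinuousLinearMapWOT.ofCLM Φ))) {y : E} (hA : ∀ i, adjoint (A i) y = y) :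
    adjoint Φ y = y :=
  ext_inner_right ℝ fun x => by
    rw [adjoint_inner_left]
    exact inner_apply_eq_of_tendsto_ofCLM h fun i => by rw [← adjoint_inner_left, hA]

lemma comp_comm_of_tendsto_ofCLM
    (h : Tendsto (fun i => ContinuousLinearMapWOT.ofCLM (A i)) l
      (𝓝 (ContinuousLinearMapWOT.ofCLM Φ))) {B : E →L[ℝ] E}
    (hA : ∀ i, (A i).comp B = B.comp (A i)) : Φ.comp B = B.comp Φ := by
  ext1 x
  refine ext_inner_left ℝ fun y => ?_
  rw [comp_apply, comp_apply, ← adjoint_inner_left B]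
  refine tendsto_nhds_unique (tendsto_inner_apply_of_tendsto_ofCLM h (B x) y) ?_
  convert tendsto_inner_apply_of_tendsto_ofCLM h x (adjoint B y) using 2 with i
  rw [adjoint_inner_left, ← comp_apply (A i), hA i, comp_apply]

lemma nonneg_apply_of_tendsto_ofCLM {X : Type*} [MeasurableSpace X] {μ : Measure X}
    [IsFiniteMeasure μ] {A : ι → Lp ℝ 2 μ →L[ℝ] Lp ℝ 2 μ} {Φ : Lp ℝ 2 μ →L[ℝ] Lp ℝ 2 μ}
    (h : Tendsto (fun i => ContinuousLinearMapWOT.ofCLM (A i)) l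
      (𝓝 (ContinuousLinearMapWOT.ofCLM Φ))) (hA : ∀ i f, 0 ≤ f → 0 ≤ A i f)
    {f : Lp ℝ 2 μ} (hf : 0 ≤ f) : 0 ≤ Φ f :=
  nonneg_of_forall_inner_indicatorL2_nonneg fun _ hB =>
    ge_of_tendsto' (tendsto_inner_apply_of_tendsto_ofCLM h f _) fun i =>
      L2.inner_nonneg_of_nonneg (indicatorL2_nonneg hB) (hA i f hf)

end WeakOperatorLimits

section Koopman

variable {X Y : Type*} [MeasurableSpace X] [MeasurableSpace Y] {μ : Measure X} {ν : Measure Y}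
  {g : X → Y}

lemma MeasureTheory.Lp.compMeasurePreserving_nonneg {p : ℝ≥0∞} (hg : MeasurePreserving g μ ν)
    {f : Lp ℝ p ν} (hf : 0 ≤ f) : 0 ≤ Lp.compMeasurePreserving g hg f := by
  rw [← Lp.coeFn_nonneg]
  filter_upwards [Lp.coeFn_compMeasurePreserving f hg,
    hg.quasiMeasurePreserving.ae ((Lp.coeFn_nonneg f).2 hf)] with x hfg hfx
  rw [hfg]
  exact hfx

lemma compMeasurePreserving_indicatorL2 [IsFiniteMeasure μ] [IsFiniteMeasure ν]
    (hg : MeasurePreserving g μ ν) {A : Set Y} (hA : MeasurableSet A) :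
    Lp.compMeasurePreserving g hg (indicatorL2 ν hA) = indicatorL2 μ (hA.preimage hg.measurable) :=
  rfl

lemma compMeasurePreserving_lpOne [IsProbabilityMeasure μ] [IsProbabilityMeasure ν]
    (hg : MeasurePreserving g μ ν) : Lp.compMeasurePreserving g hg (lpOne ν) = lpOne μ := by
  rw [← indicatorL2_univ, ← indicatorL2_univ, compMeasurePreserving_indicatorL2]
  rfl

lemma inner_lpOne_compMeasurePreserving [IsProbabilityMeasure μ] [IsProbabilityMeasure ν]
    (hg : MeasurePreserving g μ ν) (f : Lp ℝ 2 ν) :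
    ⟪lpOne μ, Lp.compMeasurePreserving g hg f⟫ = ⟪lpOne ν, f⟫ := by
  have hmap := integral_map (f := fun y => f y) hg.aemeasurable
    (by rw [hg.map_eq]; exact Lp.aestronglyMeasurable f)
  rw [hg.map_eq] at hmap
  rw [inner_lpOne, inner_lpOne, integral_congr_ae (Lp.coeFn_compMeasurePreserving f hg), hmap]
  rfl

end Koopman

section Flow

variable {X : Type*} [MeasurableSpace X] {μ : Measure X} {T : ℝ → X → X}
  {U : ℝ → Lp ℝ 2 μ →L[ℝ] Lp ℝ 2 μ}

lemma koopman_apply_eq (hTmp : ∀ t, MeasurePreserving (T t) μ μ)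
    (hU : ∀ (t : ℝ) (f : Lp ℝ 2 μ), (U t f : X → ℝ) =ᵐ[μ] fun x => (f : X → ℝ) (T t x))
    (s : ℝ) (f : Lp ℝ 2 μ) : U s f = Lp.compMeasurePreserving (T s) (hTmp s) f :=
  Lp.ext ((hU s f).trans (Lp.coeFn_compMeasurePreserving f (hTmp s)).symm)

lemma koopman_apply_koopman (hTadd : ∀ s t x, T (s + t) x = T s (T t x))
    (hTmp : ∀ t, MeasurePreserving (T t) μ μ)
    (hU : ∀ (t : ℝ) (f : Lp ℝ 2 μ), (U t f : X → ℝ) =ᵐ[μ] fun x => (f : X → ℝ) (T t x))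
    (s τ : ℝ) (f : Lp ℝ 2 μ) : U s (U τ f) = U (τ + s) f := by
  refine Lp.ext ?_
  filter_upwards [hU s (U τ f), (hTmp s).quasiMeasurePreserving.ae_eq (hU τ f),
    hU (τ + s) f] with x hs hτ hτs
  rw [hs, hτs, hTadd]
  exact hτ

lemma koopman_comp_comm (hTadd : ∀ s t x, T (s + t) x = T s (T t x))
    (hTmp : ∀ t, MeasurePreserving (T t) μ μ)
    (hU : ∀ (t : ℝ) (f : Lp ℝ 2 μ), (U t f : X → ℝ) =ᵐ[μ] fun x => (f : X → ℝ) (T t x))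
    (s τ : ℝ) : (U s).comp (U τ) = (U τ).comp (U s) := by
  ext1 f
  rw [ContinuousLinearMap.comp_apply, ContinuousLinearMap.comp_apply,
    koopman_apply_koopman hTadd hTmp hU, koopman_apply_koopman hTadd hTmp hU, add_comm]

lemma adjoint_koopman_lpOne [IsProbabilityMeasure μ] (hTmp : ∀ t, MeasurePreserving (T t) μ μ)
    (hU : ∀ (t : ℝ) (f : Lp ℝ 2 μ), (U t f : X → ℝ) =ᵐ[μ] fun x => (f : X → ℝ) (T t x))
    (s : ℝ) : ContinuousLinearMap.adjoint (U s) (lpOne μ) = lpOne μ :=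
  ext_inner_right ℝ fun f => by
    rw [ContinuousLinearMap.adjoint_inner_left, koopman_apply_eq hTmp hU,
      inner_lpOne_compMeasurePreserving]

end Flow

section Rigidity

variable {X : Type*} [MeasurableSpace X] {μ : Measure X} [IsFiniteMeasure μ]

lemma mul_measureReal_le_of_partiallyRigidAlongWith {T : ℝ → X → X} {t : ℕ → ℝ} {u : ℝ}
    (hpr : PartiallyRigidAlongWith μ T t u) {n : ℕ → ℕ} (hn : StrictMono n) {A : Set X}
    (hA : MeasurableSet A) {c : ℝ}
    (hc : Tendsto (fun k => μ.real (A ∩ T (t (n k)) ⁻¹' A)) atTop (𝓝 c)) :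
    u * μ.real A ≤ c := by
  have hc₀ : 0 ≤ c := ge_of_tendsto' hc fun _ => measureReal_nonneg
  have hcE : Tendsto (fun k => μ (A ∩ T (t (n k)) ⁻¹' A)) atTop (𝓝 (ENNReal.ofReal c)) := by
    simpa [measureReal_def] using ENNReal.tendsto_ofReal hc
  rw [← ENNReal.ofReal_le_ofReal_iff hc₀, ENNReal.ofReal_mul' measureReal_nonneg,
    ofReal_measureReal]
  calc ENNReal.ofReal u * μ A ≤ liminf (fun j => μ (A ∩ T (t j) ⁻¹' A)) atTop := hpr A hA
    _ ≤ liminf (fun k => μ (A ∩ T (t (n k)) ⁻¹' A)) atTop :=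
      hn.tendsto_atTop.liminf_le_liminf_comp
    _ = ENNReal.ofReal c := hcE.liminf_eq

/-- The form `⟪1_B, Φ 1_A⟫` dominates its value on `A ∩ B`, where the diagonal bound applies. -/
lemma nonneg_sub_smul_apply_of_mul_measureReal_le {Φ : Lp ℝ 2 μ →L[ℝ] Lp ℝ 2 μ} {u : ℝ}
    (hΦ : ∀ f, 0 ≤ f → 0 ≤ Φ f)
    (hdiag : ∀ A (hA : MeasurableSet A), u * μ.real A ≤ ⟪indicatorL2 μ hA, Φ (indicatorL2 μ hA)⟫)
    {f : Lp ℝ 2 μ} (hf : 0 ≤ f) : 0 ≤ Φ f - u • f := by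
  refine nonneg_apply_of_forall_inner_indicatorL2_nonneg (Φ - u • ContinuousLinearMap.id ℝ _)
    (fun A B hA hB => ?_) hf
  have hBA := hB.inter hA
  calc 0 ≤ ⟪indicatorL2 μ hBA, Φ (indicatorL2 μ hBA)⟫ - u * μ.real (B ∩ A) :=
        sub_nonneg.2 (hdiag _ hBA)
    _ ≤ ⟪indicatorL2 μ hB, Φ (indicatorL2 μ hA)⟫ - u * μ.real (B ∩ A) := by
        gcongr
        exact L2.inner_le_inner_of_le (indicatorL2_nonneg hBA) (hΦ _ (indicatorL2_nonneg hBA))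
          (indicatorL2_mono hBA hB Set.inter_subset_left)
          ((monotone_iff_map_nonneg Φ).2 hΦ (indicatorL2_mono hBA hA Set.inter_subset_right))
    _ = ⟪indicatorL2 μ hB, (Φ - u • ContinuousLinearMap.id ℝ (Lp ℝ 2 μ)) (indicatorL2 μ hA)⟫ := by
        simp [inner_sub_right, inner_smul_right, inner_indicatorL2_indicatorL2]

end Rigidity

theorem stmt15_general {X : Type*} [MeasurableSpace X]
    (μ : Measure X) [IsProbabilityMeasure μ]
    (T : ℝ → X → X)
    (hTadd : ∀ s t : ℝ, ∀ x : X, T (s + t) x = T s (T t x))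
    (hTmp : ∀ t : ℝ, MeasurePreserving (T t) μ μ)
    (U : ℝ → (Lp ℝ 2 μ →L[ℝ] Lp ℝ 2 μ))
    (hU : ∀ (t : ℝ) (f : Lp ℝ 2 μ), (U t f : X → ℝ) =ᵐ[μ] fun x => (f : X → ℝ) (T t x))
    (t : ℕ → ℝ)
    (u : ℝ) (hu1 : u ≤ 1)
    (hpr : PartiallyRigidAlongWith μ T t u) :
    ∀ n : ℕ → ℕ, StrictMono n → ∀ Φ : Lp ℝ 2 μ →L[ℝ] Lp ℝ 2 μ,
      Tendsto (fun k => ContinuousLinearMapWOT.ofCLM (σ := RingHom.id ℝ) (E := Lp ℝ 2 μ) (F := Lp ℝ 2 μ) (U (t (n k))))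
        atTop (nhds (ContinuousLinearMapWOT.ofCLM (σ := RingHom.id ℝ) (E := Lp ℝ 2 μ) (F := Lp ℝ 2 μ) Φ)) →
      ∃ K : Lp ℝ 2 μ →L[ℝ] Lp ℝ 2 μ, IsMarkovOp μ K ∧
        (∀ τ : ℝ, K.comp (U τ) = (U τ).comp K) ∧
        Φ = u • ContinuousLinearMap.id ℝ (Lp ℝ 2 μ) + (1 - u) • K := by
  intro n hn Φ hΦ
  have hΦ_nonneg : ∀ f, 0 ≤ f → 0 ≤ Φ f := fun f hf =>
    nonneg_apply_of_tendsto_ofCLM hΦ (fun k f hf => by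
      rw [koopman_apply_eq hTmp hU]
      exact Lp.compMeasurePreserving_nonneg _ hf) hf
  have hdiag : ∀ A (hA : MeasurableSet A),
      u * μ.real A ≤ ⟪indicatorL2 μ hA, Φ (indicatorL2 μ hA)⟫ := fun A hA =>
    mul_measureReal_le_of_partiallyRigidAlongWith hpr hn hA <| by
      simpa only [koopman_apply_eq hTmp hU, compMeasurePreserving_indicatorL2,
        inner_indicatorL2_indicatorL2] using
        tendsto_inner_apply_of_tendsto_ofCLM hΦ (indicatorL2 μ hA) (indicatorL2 μ hA)
  refine exists_isMarkovOp_eq_smul_id_add_smul hu1 ?_ ?_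
    (fun f hf => nonneg_sub_smul_apply_of_mul_measureReal_le hΦ_nonneg hdiag hf)
    (fun τ => comp_comm_of_tendsto_ofCLM hΦ fun k => koopman_comp_comm hTadd hTmp hU _ _)
  · exact apply_eq_of_tendsto_ofCLM hΦ fun k => by
      rw [koopman_apply_eq hTmp hU, compMeasurePreserving_lpOne]
  · exact adjoint_apply_eq_of_tendsto_ofCLM hΦ fun k => adjoint_koopman_lpOne hTmp hU _

/-- Remark 2.2, first part: let `T` be an ergodic measure-preserving flow
which is partially rigid along `t_n → ∞` with rigidity constant `u ∈ (0, 1]`. Then for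
every subsequence `t_{n_k}` along which the Koopman operators converge in the weak
operator topology, the limit operator equals `u·Id + (1-u)·K` for some `K ∈ J(T)`. -/
theorem stmt15 {X : Type*} [MeasurableSpace X] [StandardBorelSpace X]
    (μ : Measure X) [IsProbabilityMeasure μ]
    (T : ℝ → X → X)
    (hT0 : ∀ x : X, T 0 x = x)
    (hTadd : ∀ s t : ℝ, ∀ x : X, T (s + t) x = T s (T t x))
    (hTmeas : Measurable (Function.uncurry T))
    (hTmp : ∀ t : ℝ, MeasurePreserving (T t) μ μ)
    (U : ℝ → (Lp ℝ 2 μ →L[ℝ] Lp ℝ 2 μ))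
    (hU : ∀ (t : ℝ) (f : Lp ℝ 2 μ), (U t f : X → ℝ) =ᵐ[μ] fun x => (f : X → ℝ) (T t x))
    (hUcont : ∀ f g : Lp ℝ 2 μ, Continuous fun t : ℝ => ⟪U t f, g⟫)
    (herg : ErgodicFlow μ T)
    (t : ℕ → ℝ) (ht : Tendsto t atTop atTop)
    (u : ℝ) (hu0 : 0 < u) (hu1 : u ≤ 1)
    (hpr : PartiallyRigidAlongWith μ T t u) :
    ∀ n : ℕ → ℕ, StrictMono n → ∀ Φ : Lp ℝ 2 μ →L[ℝ] Lp ℝ 2 μ,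
      Tendsto (fun k => ContinuousLinearMapWOT.ofCLM (σ := RingHom.id ℝ) (E := Lp ℝ 2 μ) (F := Lp ℝ 2 μ) (U (t (n k))))
        atTop (nhds (ContinuousLinearMapWOT.ofCLM (σ := RingHom.id ℝ) (E := Lp ℝ 2 μ) (F := Lp ℝ 2 μ) Φ)) →
      ∃ K : Lp ℝ 2 μ →L[ℝ] Lp ℝ 2 μ, IsMarkovOp μ K ∧
        (∀ τ : ℝ, K.comp (U τ) = (U τ).comp K) ∧
        Φ = u • ContinuousLinearMap.id ℝ (Lp ℝ 2 μ) + (1 - u) • K :=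
  stmt15_general μ T hTadd hTmp U hU t u hu1 hpr
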